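/- For integers n, k with 0 ≤ 2k ≤ n, the polynomial [n choose k]_q − [n choose k−1]_q has non-negative coefficients. -/
import Mathlib


open Finset Polynomial

/-- The Gaussian binomial coefficient `[n choose k]_q`, i.e. the q-binomial
coefficient `[n]!_q / ([k]!_q [n-k]!_q)`, as a polynomial in `q` with integer
coefficients, defined via the q-Pascal recurrence. It is `0` when `k > n`. -/
noncomputable def qbinom : ℕ → ℕ → Polynomial ℤ
  | _, 0 => 1
  | 0, _ + 1 => 0
  | n + 1, k + 1 => qbinom n k + Polynomial.X ^ (k + 1) * qbinom n (k + 1)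
  termination_by n k => (n, k)

lemma qbinom_zero (n : ℕ) : qbinom n 0 = 1 := by rw [qbinom]

lemma qbinom_succ (n k : ℕ) :
    qbinom (n+1) (k+1) = qbinom n k + Polynomial.X ^ (k + 1) * qbinom n (k + 1) := by
  rw [qbinom]

lemma qbinom_of_lt : ∀ {n k : ℕ}, n < k → qbinom n k = 0 := by
  intro n
  induction n with
  | zero => intro k hk; match k, hk with
    | k+1, _ => rw [qbinom]
  | succ n ih =>
    intro k hk
    match k, hk with
    | k+1, hk =>
      rw [qbinom_succ, ih (by omega), ih (by omega), mul_zero, add_zero]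

lemma qbinom_diag : ∀ n : ℕ, qbinom n n = 1 := by
  intro n
  induction n with
  | zero => exact qbinom_zero 0
  | succ n ih => rw [qbinom_succ, ih, qbinom_of_lt (by omega), mul_zero, add_zero]

lemma qbinom_one : ∀ n : ℕ, qbinom n 1 = ∑ i ∈ Finset.range n, Polynomial.X ^ i := by
  intro n
  induction n with
  | zero => simp [qbinom_of_lt]
  | succ n ih =>
    rw [show (1:ℕ) = 0 + 1 from rfl, qbinom_succ, qbinom_zero, ih, geom_sum_succ]
    ring

/-- The second q-Pascal recurrence. -/
lemma qbinom_succ' : ∀ n k : ℕ,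
    qbinom (n+1) (k+1) = Polynomial.X ^ (n - k) * qbinom n k + qbinom n (k+1) := by
  intro n
  induction n with
  | zero =>
    intro k
    match k with
    | 0 => simp [qbinom_succ, qbinom_zero, qbinom_of_lt]
    | k+1 => simp [qbinom_of_lt (show (0:ℕ) < k+1 by omega),
        qbinom_of_lt (show (0:ℕ) < k+2 by omega), qbinom_of_lt (show (1:ℕ) < k+2 by omega)]
  | succ n ih =>
    intro k
    match k with
    | 0 =>
      rw [qbinom_succ, qbinom_zero, qbinom_one]
      have h1 : (∑ i ∈ Finset.range (n+2), (Polynomial.X : Polynomial ℤ) ^ i)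
          = Polynomial.X * ∑ i ∈ Finset.range (n+1), Polynomial.X ^ i + 1 := geom_sum_succ
      have h2 : (∑ i ∈ Finset.range (n+2), (Polynomial.X : Polynomial ℤ) ^ i)
          = Polynomial.X ^ (n+1) + ∑ i ∈ Finset.range (n+1), Polynomial.X ^ i :=
        geom_sum_succ'
      rw [Nat.sub_zero]
      linear_combination h2 - h1
    | j+1 =>
      rcases le_or_gt (j+1) n with hj | hj
      · obtain ⟨d, rfl⟩ : ∃ d, n = j + 1 + d := ⟨n - (j+1), by omega⟩
        conv_rhs => rw [qbinom_succ (j+1+d) j, qbinom_succ (j+1+d) (j+1)]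
        rw [qbinom_succ, ih j, ih (j+1)]
        simp only [show j+1+d - j = d+1 from by omega, show j+1+d-(j+1) = d from by omega,
          show j+1+d+1-(j+1) = d+1 from by omega]
        ring
      · rw [qbinom_succ, qbinom_of_lt (show n+1 < j+2 by omega), mul_zero, add_zero]
        rcases eq_or_lt_of_le (Nat.lt_succ_iff.mp hj) with h | h
        · subst h
          rw [show n+1-(n+1) = 0 from by omega, pow_zero, one_mul, add_zero]
        · rw [qbinom_of_lt (show n+1 < j+1 by omega), mul_zero, zero_add]

lemma qbinom_symm : ∀ n k : ℕ, k ≤ n → qbinom n k = qbinom n (n - k) := by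
  intro n
  induction n with
  | zero => intro k hk; interval_cases k; rfl
  | succ n ih =>
    intro k hk
    match k with
    | 0 => rw [qbinom_zero, Nat.sub_zero, qbinom_diag]
    | j+1 =>
      rcases eq_or_lt_of_le hk with h | h
      · rw [← h, Nat.sub_self, qbinom_diag, qbinom_zero]
      · -- j+1 ≤ n
        have hj : j + 1 ≤ n := by omega
        rw [qbinom_succ, show n+1-(j+1) = (n-j-1)+1 from by omega, qbinom_succ',
          show n - (n-j-1) = j+1 from by omega, ih j (by omega), ih (j+1) hj,
          show n - (j+1) = n-j-1 from by omega, show (n-j-1)+1 = n-j from by omega]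
        ring

lemma qbinom_coeff_nonneg : ∀ n k : ℕ, ∀ m : ℕ, 0 ≤ (qbinom n k).coeff m := by
  intro n
  induction n with
  | zero =>
    intro k m
    match k with
    | 0 => rw [qbinom_zero, Polynomial.coeff_one]; positivity
    | k+1 => rw [qbinom_of_lt (by omega)]; simp
  | succ n ih =>
    intro k m
    match k with
    | 0 => rw [qbinom_zero, Polynomial.coeff_one]; positivity
    | k+1 =>
      rw [qbinom_succ, Polynomial.coeff_add, Polynomial.X_pow_mul,
        Polynomial.coeff_mul_X_pow']
      have := ih k m
      split <;> [exact add_nonneg this (ih (k+1) _); simpa using this]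

lemma coeff_X_pow_mul_nonneg {p : Polynomial ℤ} (h : ∀ m, 0 ≤ p.coeff m) (a m : ℕ) :
    0 ≤ (Polynomial.X ^ a * p).coeff m := by
  rw [Polynomial.X_pow_mul, Polynomial.coeff_mul_X_pow']
  split
  · exact h _
  · exact le_refl 0

lemma qbinom_AB : ∀ n : ℕ,
    (∀ k m, 2*(k+1) ≤ n+1 → 0 ≤ (qbinom n (k+1) - qbinom n k).coeff m) ∧
    (∀ k m, 2*(k+1) ≤ n → 0 ≤ (qbinom n (k+1) - Polynomial.X * qbinom n k).coeff m) := by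
  intro n
  induction n with
  | zero => exact ⟨fun k m hk => by omega, fun k m hk => by omega⟩
  | succ n ih =>
    obtain ⟨hA, hB⟩ := ih
    constructor
    · intro k m hk
      match k, hk with
      | 0, hk =>
        have key : qbinom (n+1) (0+1) - qbinom (n+1) 0
            = Polynomial.X ^ (0+1) * qbinom n (0+1) := by
          rw [qbinom_succ, qbinom_zero, qbinom_zero]; ring
        rw [key]
        exact coeff_X_pow_mul_nonneg (fun m => qbinom_coeff_nonneg n 1 m) _ m
      | j+1, hk =>
        rcases le_or_gt (2*j+3) n with hn | hn
        · -- generic case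
          have key : qbinom (n+1) (j+1+1) - qbinom (n+1) (j+1)
              = (qbinom n (j+1+1) - qbinom n (j+1))
                + Polynomial.X ^ (n-j-1) * (qbinom n (j+1) - Polynomial.X * qbinom n j) := by
            obtain ⟨d, rfl⟩ : ∃ d, n = j + 2 + d := ⟨n - (j+2), by omega⟩
            rw [qbinom_succ' _ (j+1), qbinom_succ' _ j,
              show j+2+d-(j+1) = d+1 from by omega, show j+2+d-j = d+2 from by omega,
              show d+2-1 = d+1 from by omega]
            ring
          rw [key, Polynomial.coeff_add]
          exact add_nonneg (hA (j+1) m (by omega))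
            (coeff_X_pow_mul_nonneg (fun m' => hB j m' (by omega)) _ m)
        · -- boundary case n = 2j+2 : difference is zero by symmetry
          have hsym : qbinom (n+1) (j+1+1) = qbinom (n+1) (j+1) := by
            rw [qbinom_symm (n+1) (j+1+1) (by omega), show n+1-(j+1+1) = j+1 from by omega]
          rw [hsym, sub_self, Polynomial.coeff_zero]
    · intro k m hk
      match k, hk with
      | 0, hk =>
        have key : qbinom (n+1) (0+1) - Polynomial.X * qbinom (n+1) 0
            = 1 + Polynomial.X ^ 1 * (qbinom n (0+1) - qbinom n 0) := by
          rw [qbinom_succ, qbinom_zero, qbinom_zero]; ring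
        rw [key, Polynomial.coeff_add]
        refine add_nonneg ?_ (coeff_X_pow_mul_nonneg (fun m' => hA 0 m' (by omega)) 1 m)
        rw [Polynomial.coeff_one]
        positivity
      | j+1, hk =>
        have key : qbinom (n+1) (j+1+1) - Polynomial.X * qbinom (n+1) (j+1)
            = (qbinom n (j+1) - Polynomial.X * qbinom n j)
              + Polynomial.X ^ (j+1+1) * (qbinom n (j+1+1) - qbinom n (j+1)) := by
          rw [qbinom_succ n (j+1), qbinom_succ n j]; ring
        rw [key, Polynomial.coeff_add]
        exact add_nonneg (hB j m (by omega))
          (coeff_X_pow_mul_nonneg (fun m' => hA (j+1) m' (by omega)) _ m)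

/-- The Gaussian binomial with integer lower index, equal to `0` for negative
lower index. -/
noncomputable def qbinomZ (n : ℕ) (k : ℤ) : Polynomial ℤ :=
  if 0 ≤ k then qbinom n k.toNat else 0

/-- For integers `0 ≤ 2k ≤ n`, the polynomial
`[n choose k]_q − [n choose k−1]_q` has non-negative coefficients. -/
theorem qbinom_unimodal_step (n : ℕ) (k : ℤ) (hk : 0 ≤ k) (hkn : 2 * k ≤ (n : ℤ))
    (m : ℕ) : 0 ≤ (qbinomZ n k - qbinomZ n (k - 1)).coeff m := by
  rcases eq_or_lt_of_le hk with h0 | h0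
  · subst h0
    rw [qbinomZ, qbinomZ, if_pos le_rfl, if_neg (by omega), Int.toNat_zero, qbinom_zero,
      sub_zero, Polynomial.coeff_one]
    positivity
  · obtain ⟨j, rfl⟩ : ∃ j : ℕ, k = (j : ℤ) + 1 := ⟨(k-1).toNat, by omega⟩
    have h1 : qbinomZ n ((j:ℤ)+1) = qbinom n (j+1) := by
      rw [qbinomZ, if_pos (by positivity)]
      congr 1
    have h2 : qbinomZ n ((j:ℤ)+1-1) = qbinom n j := by
      rw [show (j:ℤ)+1-1 = (j:ℤ) from by ring, qbinomZ, if_pos (Int.natCast_nonneg j)]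
      congr 1
    rw [h1, h2]
    exact (qbinom_AB n).1 j m (by omega)
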